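/- For every d ≥ 2, n ≥ 1 and m ≥ 1, there exists a parametrized motion planning algorithm for the Fadell–Neuwirth fibration p: F(ℝ^d, n+m) → F(ℝ^d, m) whose domains of continuity are the 2n+m sets W_c = ∪_{j+t=c} A_{j,t}, c = 1,…,2n+m, partitioning E×_B E; consequently TC[p: F(ℝ^d, n+m) → F(ℝ^d, m)] ≤ 2n + m − 1. -/

import Mathlib

/-!
Pick a unit vector `f ⊥ e` and let `ε` be `1/(n+1)` of the smallest nonzero distance between the
projections `⟪·, e⟫` of the points. Robot `i` first moves by `(i+1)ε` along `e`; along the way its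
projection differs from that of every other point, so nothing collides. It then rises along `f`
to altitude `H + i + 1`, above all obstacles, where the robots have distinct altitudes and can
slide over their targets; then they descend and move back along `e`. Only `ε` depends
discontinuously on the configuration. On `W_c` the number of distinct projections is fixed, so
near a point of `W_c` no coincidence between projections is created or destroyed, and `ε` is
continuous there.
-/

noncomputable section

open unitInterval Topology

/-! ### Topological complexity and parametrized topological complexity -/

/-- The free path fibration `X^I → X × X` admits a continuous section over `U`. -/
def PathSecOn (X : Type*) [TopologicalSpace X] (U : Set (X × X)) : Prop :=
  ∃ s : U → C(unitInterval, X), Continuous s ∧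
    ∀ x : U, (s x) 0 = (x : X × X).1 ∧ (s x) 1 = (x : X × X).2

/-- The (reduced) topological complexity of a space `X`: the smallest `k` such that
`X × X` admits an open cover by `k+1` sets, over each of which the free path
fibration `π : X^I → X × X`, `π(γ) = (γ(0), γ(1))`, admits a continuous section. -/
noncomputable def topComplexity (X : Type*) [TopologicalSpace X] : ℕ :=
  sInf {k : ℕ | ∃ U : Fin (k + 1) → Set (X × X),
    (∀ i, IsOpen (U i)) ∧ (⋃ i, U i) = Set.univ ∧ ∀ i, PathSecOn X (U i)}

/-- The fiberwise product `E ×_B E` of a map `p : E → B` with itself: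
pairs `(e, e')` with `p e = p e'`. -/
def FibProd {E B : Type*} (p : E → B) : Set (E × E) := {q | p q.1 = p q.2}

/-- The space `E^I_B` of paths in `E` whose projection to `B` is constant. -/
def VertPaths {E B : Type*} [TopologicalSpace E] (p : E → B) : Set C(unitInterval, E) :=
  {γ | ∀ t, p (γ t) = p (γ 0)}

/-- The fibration `Π : E^I_B → E ×_B E`, `Π(γ) = (γ(0), γ(1))`,
admits a continuous section over the subset `F ⊆ E ×_B E`. -/
def ParamSecOn {E B : Type*} [TopologicalSpace E] (p : E → B) (F : Set ↥(FibProd p)) : Prop :=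
  ∃ s : F → ↥(VertPaths p), Continuous s ∧
    ∀ x : F, ((s x : C(unitInterval, E)) 0 = ((x : ↥(FibProd p)) : E × E).1 ∧
      (s x : C(unitInterval, E)) 1 = ((x : ↥(FibProd p)) : E × E).2)

/-- The parametrized topological complexity `TC[p : E → B]`: the smallest `k` such
that `E ×_B E` admits a partition into `k+1` subsets, over each of which the
fibration `Π : E^I_B → E ×_B E` admits a continuous section. -/
noncomputable def parTC {E B : Type*} [TopologicalSpace E] (p : E → B) : ℕ :=
  sInf {k : ℕ | ∃ F : Fin (k + 1) → Set ↥(FibProd p),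
    (⋃ i, F i) = Set.univ ∧ (Pairwise fun i j => Disjoint (F i) (F j)) ∧
    ∀ i, ParamSecOn p (F i)}

/-- `p : E → B` is a locally trivial fibration (fiber bundle) with fiber `X`. -/
def IsLocTrivFibration {E B : Type*} (X : Type*) [TopologicalSpace E] [TopologicalSpace B]
    [TopologicalSpace X] (p : E → B) : Prop :=
  Continuous p ∧ ∀ b : B, ∃ U : Set B, IsOpen U ∧ b ∈ U ∧
    ∃ φ : ↥(p ⁻¹' U) ≃ₜ U × X, ∀ e : ↥(p ⁻¹' U), ((φ e).1 : B) = p e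

universe u

/-- `X` is an absolute neighborhood retract: whenever `X` is embedded as a closed
subspace of a metrizable space `Y`, some open neighborhood of the image retracts onto it. -/
def IsANR (X : Type u) [TopologicalSpace X] : Prop :=
  ∀ (Y : Type u) (_ : TopologicalSpace Y), TopologicalSpace.MetrizableSpace Y →
    ∀ f : X → Y, Topology.IsClosedEmbedding f →
      ∃ (U : Set Y) (_ : IsOpen U) (hfU : ∀ x, f x ∈ U),
        ∃ r : C(U, X), ∀ x : X, r ⟨f x, hfU x⟩ = x

end
/-! ### Configuration spaces and the Fadell–Neuwirth fibration -/

/-- The configuration space `F(Y, n)` of `n` ordered pairwise distinct points in `Y`. -/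
def Conf (Y : Type*) (n : ℕ) : Set (Fin n → Y) := {z | Function.Injective z}

/-- The Fadell–Neuwirth fibration `p : F(ℝ^d, n+m) → F(ℝ^d, m)` which forgets the
first `n` points (the robots) and remembers the last `m` points (the obstacles). -/
def fadellNeuwirth (d n m : ℕ) :
    ↥(Conf (EuclideanSpace ℝ (Fin d)) (n + m)) → ↥(Conf (EuclideanSpace ℝ (Fin d)) m) :=
  fun z => ⟨fun j => (z : Fin (n + m) → EuclideanSpace ℝ (Fin d)) (Fin.natAdd n j),
    fun j k h => by
      have h2 : Fin.natAdd n j = Fin.natAdd n k := z.2 h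
      rw [Fin.ext_iff] at h2 ⊢
      simpa [Fin.natAdd] using h2⟩

open scoped RealInnerProductSpace

namespace FadellNeuwirthAlgorithm

variable (d n m : ℕ)

/-- The components of a point of `E ×_B E` for the Fadell–Neuwirth fibration:
initial robots, desired robots and the (common) obstacles. -/
def robots (x : ↥(FibProd (fadellNeuwirth d n m))) (i : Fin n) : EuclideanSpace ℝ (Fin d) :=
  x.1.1.1 (Fin.castAdd m i)

def robots' (x : ↥(FibProd (fadellNeuwirth d n m))) (i : Fin n) : EuclideanSpace ℝ (Fin d) :=
  x.1.2.1 (Fin.castAdd m i)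

def obstacles (x : ↥(FibProd (fadellNeuwirth d n m))) (k : Fin m) : EuclideanSpace ℝ (Fin d) :=
  x.1.1.1 (Fin.natAdd n k)

variable (e : EuclideanSpace ℝ (Fin d))

/-- The `2n + m` projections `q(z_i), q(z'_i), q(o_k)` onto the oriented line with unit
direction `e` (identified with `ℝ` in an order-preserving way). -/
noncomputable def projections (x : ↥(FibProd (fadellNeuwirth d n m))) :
    Fin n ⊕ Fin n ⊕ Fin m → ℝ :=
  Sum.elim (fun i => ⟪robots d n m x i, e⟫)
    (Sum.elim (fun i => ⟪robots' d n m x i, e⟫) (fun k => ⟪obstacles d n m x k, e⟫))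

/-- The subset `A_{j,t} ⊆ E ×_B E`: the set of projection points has cardinality `j + t`
and the set of projected obstacles has cardinality `t`. -/
noncomputable def stratum (j t : ℕ) : Set ↥(FibProd (fadellNeuwirth d n m)) :=
  {x | (Set.range (projections d n m e x)).ncard = j + t ∧
    (Set.range fun k : Fin m => ⟪obstacles d n m x k, e⟫).ncard = t}

/-- The set `W_c = ⋃_{j+t=c} A_{j,t}` (with `0 ≤ j ≤ 2n`, `1 ≤ t ≤ m`). -/
noncomputable def aggregate (c : ℕ) : Set ↥(FibProd (fadellNeuwirth d n m)) :=
  ⋃ (j : ℕ) (t : ℕ) (_ : j + t = c ∧ j ≤ 2 * n ∧ 1 ≤ t ∧ t ≤ m), stratum d n m e j t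

open Function Set Filter Topology

section MinSep

variable {ι X : Type*} [Fintype ι]

noncomputable def minSep (v : ι → ℝ) : ℝ :=
  (Finset.univ.filter fun p : ι × ι => v p.1 ≠ v p.2).fold min 1 fun p => |v p.1 - v p.2|

theorem minSep_pos (v : ι → ℝ) : 0 < minSep v := by
  rw [minSep, Finset.lt_fold_min]
  exact ⟨one_pos, fun p hp => abs_pos.2 (sub_ne_zero.2 (Finset.mem_filter.1 hp).2)⟩

theorem pairwise_minSep_le_abs_sub (v : ι → ℝ) :
    (range v).Pairwise fun a b => minSep v ≤ |a - b| := by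
  rintro _ ⟨i, rfl⟩ _ ⟨j, rfl⟩ hij
  exact (Finset.fold_min_le _).2 <|
    .inr ⟨(i, j), Finset.mem_filter.2 ⟨Finset.mem_univ _, hij⟩, le_rfl⟩

theorem Continuous.finset_fold_min {κ : Type*} [TopologicalSpace X] (s : Finset κ) (b : ℝ)
    {g : κ → X → ℝ} (hg : ∀ k ∈ s, Continuous (g k)) :
    Continuous fun x => s.fold min b (g · x) := by
  classical
  induction s using Finset.induction_on with
  | empty => exact continuous_const
  | insert k s hk ih =>
    simp only [Finset.fold_insert hk]
    exact (hg k (Finset.mem_insert_self k s)).min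
      (ih fun l hl => hg l (Finset.mem_insert_of_mem hl))

theorem eq_of_eq_of_ncard_range_le {α β : Type*} {f : ι → α} {g : ι → β}
    (hfg : ∀ a b, f a = f b → g a = g b) (hcard : (range f).ncard ≤ (range g).ncard)
    {a b : ι} (h : g a = g b) : f a = f b := by
  set K := range fun i => (f i, g i)
  have hfst : InjOn Prod.fst K := by
    rintro _ ⟨i, rfl⟩ _ ⟨j, rfl⟩ hij
    exact Prod.ext hij (hfg i j hij)
  have hK : (range f).ncard = K.ncard := by
    rw [← hfst.ncard_image, ← range_comp]; rfl
  have hsnd : InjOn Prod.snd K := by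
    refine injOn_of_ncard_image_eq (le_antisymm (ncard_image_le) ?_)
    rw [← range_comp, ← hK]
    exact hcard
  exact congrArg Prod.fst (hsnd ⟨a, rfl⟩ ⟨b, rfl⟩ h)

theorem continuousOn_minSep [TopologicalSpace X] {v : X → ι → ℝ} (hv : Continuous v) (c : ℕ) :
    ContinuousOn (fun x => minSep (v x)) {x | (range (v x)).ncard = c} := by
  intro x₀ hx₀
  set Q := Finset.univ.filter fun p : ι × ι => v x₀ p.1 ≠ v x₀ p.2
  have hQ : ∀ᶠ x in 𝓝 x₀, ∀ p ∈ Q, v x p.1 ≠ v x p.2 :=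
    (eventually_all_finset Q).2 fun p hp =>
      (isOpen_ne_fun ((continuous_apply p.1).comp hv) ((continuous_apply p.2).comp hv)).mem_nhds
        (Finset.mem_filter.1 hp).2
  refine ((Continuous.finset_fold_min Q 1 (g := fun p x => |v x p.1 - v x p.2|)
    fun p _ => ?_).continuousWithinAt).congr_of_eventuallyEq ?_ rfl
  · exact (((continuous_apply p.1).comp hv).sub ((continuous_apply p.2).comp hv)).abs
  filter_upwards [self_mem_nhdsWithin, nhdsWithin_le_nhds hQ] with x hx hxQ
  refine congrArg (Finset.fold min 1 _) (Finset.filter_congr fun p _ => ⟨fun hp h₀ => hp ?_, ?_⟩)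
  · refine eq_of_eq_of_ncard_range_le (fun a b hab => ?_) (hx.trans hx₀.symm).le h₀
    by_contra hne
    exact hxQ (a, b) (Finset.mem_filter.2 ⟨Finset.mem_univ _, hne⟩) hab
  · exact fun h₀ => hxQ p (Finset.mem_filter.2 ⟨Finset.mem_univ _, h₀⟩)

end MinSep

theorem add_mul_ne_add_mul_of_sep {n k l : ℕ} {a b ε lam : ℝ} (hk : k ≤ n) (hl : l ≤ n)
    (hε : 0 < ε) (hlam₀ : 0 < lam) (hlam₁ : lam ≤ 1) (hsep : a ≠ b → (n + 1) * ε ≤ |a - b|)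
    (hkl : a = b → k ≠ l) : a + lam * k * ε ≠ b + lam * l * ε := by
  intro h
  have hdiff : a - b = lam * ε * ((l : ℝ) - k) := by linarith
  by_cases hab : a = b
  · have h0 : lam * ε * ((l : ℝ) - k) = 0 := by rw [← hdiff, hab, sub_self]
    have := (mul_eq_zero.1 h0).resolve_left (mul_pos hlam₀ hε).ne'
    exact hkl hab (by exact_mod_cast (sub_eq_zero.1 this).symm)
  · have hk' : (k : ℝ) ≤ n := by exact_mod_cast hk
    have hl' : (l : ℝ) ≤ n := by exact_mod_cast hl
    have hlk : |(l : ℝ) - k| ≤ n :=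
      abs_sub_le_iff.2 ⟨by linarith [k.cast_nonneg (α := ℝ)], by linarith [l.cast_nonneg (α := ℝ)]⟩
    have hshift : lam * ε * |(l : ℝ) - k| ≤ 1 * ε * n := by gcongr
    have := hsep hab
    rw [hdiff, abs_mul, abs_of_pos (mul_pos hlam₀ hε)] at this
    linarith

section Lift

variable {V : Type*} [NormedAddCommGroup V] [InnerProductSpace ℝ V]

/-- `w` moved a fraction `lam` of the way into lane `k` (offset `kε` along `e`) and a fraction `mu`
of the way up to altitude `H + k` along `f`. -/
def lift (e f : V) (ε H lam mu : ℝ) (k : ℕ) (w : V) : V :=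
  w + (lam * k * ε) • e + (mu * (H + k - ⟪w, f⟫)) • f

variable {e f : V}

@[simp]
theorem lift_zero_zero (ε H : ℝ) (k : ℕ) (w : V) : lift e f ε H 0 0 k w = w := by
  simp [lift]

theorem inner_lift_lane (he : ‖e‖ = 1) (hef : ⟪e, f⟫ = 0) (ε H lam mu : ℝ) (k : ℕ) (w : V) :
    ⟪lift e f ε H lam mu k w, e⟫ = ⟪w, e⟫ + lam * k * ε := by
  simp [lift, inner_add_left, real_inner_smul_left, real_inner_comm e f, hef, he]

theorem inner_lift_one_altitude (hf : ‖f‖ = 1) (hef : ⟪e, f⟫ = 0) (ε H lam : ℝ) (k : ℕ)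
    (w : V) :
    ⟪lift e f ε H lam 1 k w, f⟫ = H + k := by
  simp [lift, inner_add_left, real_inner_smul_left, hef, hf]

variable {n m : ℕ}

theorem injective_append_lift (he : ‖e‖ = 1) (hef : ⟪e, f⟫ = 0) {ε H lam mu : ℝ} (hε : 0 < ε)
    (hlam : lam ∈ Icc (0 : ℝ) 1) (hmu : mu ≠ 0 → lam ≠ 0) {w : Fin n → V} {o : Fin m → V}
    (hinj : Injective (Fin.append w o))
    (hsep : (range fun α => ⟪Fin.append w o α, e⟫).Pairwise fun a b => (n + 1) * ε ≤ |a - b|) :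
    Injective (Fin.append (fun i => lift e f ε H lam mu ((i : ℕ) + 1) (w i)) o) := by
  rcases hlam.1.eq_or_lt with rfl | hlam₀
  · obtain rfl : mu = 0 := by_contra fun h => hmu h rfl
    simpa using hinj
  have hsep' (α β) := @hsep _ ⟨α, rfl⟩ _ ⟨β, rfl⟩
  obtain ⟨-, ho, -⟩ := Fin.append_injective_iff.1 hinj
  refine Fin.append_injective_iff.2 ⟨fun i j hij => ?_, ho, fun i k hik => ?_⟩
  · by_contra hne
    have := congrArg (⟪·, e⟫) hij
    simp only [inner_lift_lane he hef, Nat.cast_add, Nat.cast_one] at this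
    have hij' := hsep' (Fin.castAdd m i) (Fin.castAdd m j)
    simp only [Fin.append_left] at hij'
    exact add_mul_ne_add_mul_of_sep i.2 j.2 hε hlam₀ hlam.2 hij'
      (fun _ h => hne (Fin.ext (by omega))) (by exact_mod_cast this)
  · have := congrArg (⟪·, e⟫) hik
    simp only [inner_lift_lane he hef] at this
    have hik' := hsep' (Fin.castAdd m i) (Fin.natAdd n k)
    simp only [Fin.append_left, Fin.append_right] at hik'
    exact add_mul_ne_add_mul_of_sep (l := 0) i.2 (Nat.zero_le n) hε hlam₀ hlam.2 hik'
      (fun _ => by omega) (by simpa using this)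

theorem injective_append_lift_one (hf : ‖f‖ = 1) (hef : ⟪e, f⟫ = 0) (ε H lam : ℝ)
    (w : Fin n → V) {o : Fin m → V} (ho : Injective o) (hH : ∀ k, ⟪o k, f⟫ ≤ H) :
    Injective (Fin.append (fun i => lift e f ε H lam 1 ((i : ℕ) + 1) (w i)) o) := by
  refine Fin.append_injective_iff.2 ⟨fun i j hij => ?_, ho, fun i k hik => ?_⟩
  · have := congrArg (⟪·, f⟫) hij
    simp only [inner_lift_one_altitude hf hef, add_right_inj, Nat.cast_inj] at this
    exact Fin.ext (by omega)
  · have := congrArg (⟪·, f⟫) hik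
    simp only [inner_lift_one_altitude hf hef, Nat.cast_add, Nat.cast_one] at this
    linarith [hH k, (i : ℕ).cast_nonneg (α := ℝ)]

end Lift

section Schedule

/- The robots change lane on `[0, 1/6]`, rise on `[1/6, 1/3]` and slide at altitude on
`[1/3, 2/3]`; the second half undoes the first. -/

def laneTime (t : ℝ) : ℝ := max 0 (min 1 (6 * min t (1 - t)))

def altitudeTime (t : ℝ) : ℝ := max 0 (min 1 (6 * min t (1 - t) - 1))

def slideTime (t : ℝ) : ℝ := max 0 (min 1 (3 * t - 1))

theorem laneTime_mem_Icc (t : ℝ) : laneTime t ∈ Icc (0 : ℝ) 1 :=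
  ⟨le_max_left _ _, max_le zero_le_one (min_le_left _ _)⟩

theorem laneTime_ne_zero_of_altitudeTime_ne_zero {t : ℝ} (h : altitudeTime t ≠ 0) :
    laneTime t ≠ 0 := by
  unfold altitudeTime laneTime at *
  grind

theorem slideTime_eq_zero_or_eq_one_or_altitudeTime_eq_one (t : ℝ) :
    slideTime t = 0 ∨ slideTime t = 1 ∨ altitudeTime t = 1 := by
  unfold slideTime altitudeTime
  grind

@[simp] theorem laneTime_zero : laneTime 0 = 0 := by norm_num [laneTime]
@[simp] theorem laneTime_one : laneTime 1 = 0 := by norm_num [laneTime]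
@[simp] theorem altitudeTime_zero : altitudeTime 0 = 0 := by norm_num [altitudeTime]
@[simp] theorem altitudeTime_one : altitudeTime 1 = 0 := by norm_num [altitudeTime]
@[simp] theorem slideTime_zero : slideTime 0 = 0 := by norm_num [slideTime]
@[simp] theorem slideTime_one : slideTime 1 = 1 := by norm_num [slideTime]

@[fun_prop] theorem continuous_laneTime : Continuous laneTime := by
  unfold laneTime; fun_prop
@[fun_prop] theorem continuous_altitudeTime : Continuous altitudeTime := by
  unfold altitudeTime; fun_prop
@[fun_prop] theorem continuous_slideTime : Continuous slideTime := by
  unfold slideTime; fun_prop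

end Schedule

section Motion

variable {V : Type*} [NormedAddCommGroup V] [InnerProductSpace ℝ V] {n m : ℕ}

def motion (e f : V) (ε H : ℝ) (z z' : Fin n → V) (o : Fin m → V) (t : ℝ) : Fin (n + m) → V :=
  Fin.append (fun i => lift e f ε H (laneTime t) (altitudeTime t) ((i : ℕ) + 1)
    (AffineMap.lineMap (z i) (z' i) (slideTime t))) o

variable {e f : V} {ε H : ℝ} {z z' : Fin n → V} {o : Fin m → V}

@[simp] theorem motion_zero : motion e f ε H z z' o 0 = Fin.append z o := by simp [motion]

@[simp] theorem motion_one : motion e f ε H z z' o 1 = Fin.append z' o := by simp [motion]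

@[simp] theorem motion_natAdd (t : ℝ) (k : Fin m) :
    motion e f ε H z z' o t (Fin.natAdd n k) = o k := by
  simp [motion]

theorem injective_motion (he : ‖e‖ = 1) (hf : ‖f‖ = 1) (hef : ⟪e, f⟫ = 0) (hε : 0 < ε)
    (hz : Injective (Fin.append z o)) (hz' : Injective (Fin.append z' o))
    (hsep : (range fun α => ⟪Fin.append z o α, e⟫).Pairwise fun a b => (n + 1) * ε ≤ |a - b|)
    (hsep' : (range fun α => ⟪Fin.append z' o α, e⟫).Pairwise fun a b => (n + 1) * ε ≤ |a - b|)
    (hH : ∀ k, ⟪o k, f⟫ ≤ H) (t : ℝ) : Injective (motion e f ε H z z' o t) := by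
  rcases slideTime_eq_zero_or_eq_one_or_altitudeTime_eq_one t with h | h | h <;>
    simp only [motion, h, AffineMap.lineMap_apply_zero, AffineMap.lineMap_apply_one]
  · exact injective_append_lift he hef hε (laneTime_mem_Icc t)
      laneTime_ne_zero_of_altitudeTime_ne_zero hz hsep
  · exact injective_append_lift he hef hε (laneTime_mem_Icc t)
      laneTime_ne_zero_of_altitudeTime_ne_zero hz' hsep'
  · exact injective_append_lift_one hf hef _ _ _ _ (Fin.append_injective_iff.1 hz).2.1 hH

@[fun_prop]
theorem continuous_motion {X : Type*} [TopologicalSpace X] {ε H t : X → ℝ}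
    {z z' : X → Fin n → V} {o : X → Fin m → V} (hε : Continuous ε) (hH : Continuous H)
    (hz : Continuous z) (hz' : Continuous z') (ho : Continuous o) (ht : Continuous t) :
    Continuous fun x => motion e f (ε x) (H x) (z x) (z' x) (o x) (t x) := by
  unfold motion lift
  fun_prop

end Motion

theorem exists_norm_eq_one_inner_eq_zero {V : Type*} [NormedAddCommGroup V]
    [InnerProductSpace ℝ V] [FiniteDimensional ℝ V] (hV : 2 ≤ Module.finrank ℝ V) (e : V) :
    ∃ f : V, ‖f‖ = 1 ∧ ⟪e, f⟫ = 0 := by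
  have hperp : (ℝ ∙ e)ᗮ ≠ ⊥ := by
    intro h
    have := finrank_span_le_card (R := ℝ) ({e} : Set V)
    rw [Submodule.orthogonal_eq_bot_iff.1 h, finrank_top, toFinset_singleton,
      Finset.card_singleton] at this
    omega
  obtain ⟨v, hv, hv0⟩ := Submodule.exists_mem_ne_zero_of_ne_bot hperp
  exact ⟨‖v‖⁻¹ • v, norm_smul_inv_norm hv0, by
    rw [real_inner_smul_right, Submodule.mem_orthogonal_singleton_iff_inner_right.1 hv, mul_zero]⟩

theorem parTC_le_of_iUnion_Icc {E B : Type*} [TopologicalSpace E] {p : E → B} {N : ℕ}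
    (W : ℕ → Set (FibProd p)) (hcov : (⋃ c ∈ Finset.Icc 1 N, W c) = univ)
    (hdisj : ∀ c c', c ≠ c' → Disjoint (W c) (W c')) (hsec : ∀ c, ParamSecOn p (W c)) :
    parTC p ≤ N - 1 := by
  refine Nat.sInf_le ⟨fun i => W (i + 1), eq_univ_of_forall fun x => ?_,
    fun i j hij => hdisj _ _ fun h => hij (Fin.ext (by omega)), fun i => hsec _⟩
  obtain ⟨c, hc, hx⟩ := mem_iUnion₂.1 (hcov ▸ mem_univ x)
  rw [Finset.mem_Icc] at hc
  exact mem_iUnion.2 ⟨⟨c - 1, by omega⟩, by rwa [Nat.sub_add_cancel hc.1]⟩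

theorem ncard_range_le_of_fin {α : Type*} {k : ℕ} (g : Fin k → α) : (range g).ncard ≤ k := by
  rw [← image_univ]
  exact le_trans ncard_image_le (by simp)

section Strata

variable {d n m} {e}

theorem ncard_range_projections_of_mem_aggregate {c : ℕ} {x : FibProd (fadellNeuwirth d n m)}
    (hx : x ∈ aggregate d n m e c) : (range (projections d n m e x)).ncard = c := by
  simp only [aggregate, mem_iUnion] at hx
  obtain ⟨j, t, ⟨rfl, -⟩, hx, -⟩ := hx
  exact hx

theorem mem_Icc_of_mem_aggregate {c : ℕ} {x : FibProd (fadellNeuwirth d n m)}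
    (hx : x ∈ aggregate d n m e c) : c ∈ Finset.Icc 1 (2 * n + m) := by
  simp only [aggregate, mem_iUnion] at hx
  obtain ⟨j, t, ⟨rfl, hj, ht, htm⟩, -⟩ := hx
  exact Finset.mem_Icc.2 ⟨by omega, by omega⟩

theorem mem_aggregate_ncard_range_projections (hm : 1 ≤ m)
    (x : FibProd (fadellNeuwirth d n m)) :
    x ∈ aggregate d n m e (range (projections d n m e x)).ncard := by
  set S := range (projections d n m e x)
  set T := range fun k => ⟪obstacles d n m x k, e⟫
  have hS : S = (range fun i => ⟪robots d n m x i, e⟫) ∪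
      ((range fun i => ⟪robots' d n m x i, e⟫) ∪ T) := by
    simp only [S, T, projections, Sum.elim_range]
  have hTS : T.ncard ≤ S.ncard := ncard_le_ncard (hS ▸ subset_union_right.trans subset_union_right)
  have hST : S.ncard ≤ n + (n + T.ncard) := by
    rw [hS]
    refine (ncard_union_le _ _).trans (add_le_add (ncard_range_le_of_fin _) ?_)
    exact (ncard_union_le _ _).trans (add_le_add (ncard_range_le_of_fin _) le_rfl)
  have hT : 1 ≤ T.ncard := (ncard_pos).2 ⟨_, ⟨⟨0, hm⟩, rfl⟩⟩
  simp only [aggregate, mem_iUnion]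
  exact ⟨S.ncard - T.ncard, T.ncard, ⟨by omega, by omega, hT, ncard_range_le_of_fin _⟩,
    (Nat.sub_add_cancel hTS).symm, rfl⟩

end Strata

section Planner

variable {d n m}

theorem obstacles_eq_snd (x : FibProd (fadellNeuwirth d n m)) (k : Fin m) :
    obstacles d n m x k = x.1.2.1 (Fin.natAdd n k) :=
  congrArg (fun z => z.1 k) x.2

theorem append_robots_obstacles (x : FibProd (fadellNeuwirth d n m)) :
    Fin.append (robots d n m x) (obstacles d n m x) = x.1.1.1 :=
  Fin.append_castAdd_natAdd

theorem append_robots'_obstacles (x : FibProd (fadellNeuwirth d n m)) :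
    Fin.append (robots' d n m x) (obstacles d n m x) = x.1.2.1 := by
  rw [funext (obstacles_eq_snd x)]
  exact Fin.append_castAdd_natAdd

@[fun_prop] theorem continuous_robots : Continuous (robots d n m) :=
  continuous_pi fun _ => (continuous_apply _).comp <|
    continuous_subtype_val.comp <| continuous_fst.comp continuous_subtype_val

@[fun_prop] theorem continuous_robots' : Continuous (robots' d n m) :=
  continuous_pi fun _ => (continuous_apply _).comp <|
    continuous_subtype_val.comp <| continuous_snd.comp continuous_subtype_val

@[fun_prop] theorem continuous_obstacles : Continuous (obstacles d n m) :=
  continuous_pi fun _ => (continuous_apply _).comp <|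
    continuous_subtype_val.comp <| continuous_fst.comp continuous_subtype_val

@[fun_prop] theorem continuous_projections : Continuous (projections d n m e) :=
  continuous_pi fun α => by
    rcases α with i | i | k <;> simp only [projections, Sum.elim_inl, Sum.elim_inr] <;> fun_prop

noncomputable def scale (x : FibProd (fadellNeuwirth d n m)) : ℝ :=
  minSep (projections d n m e x) / (n + 1)

noncomputable def ceiling (x : FibProd (fadellNeuwirth d n m)) : ℝ := ∑ k, ‖obstacles d n m x k‖

noncomputable def planPath (f : EuclideanSpace ℝ (Fin d)) (x : FibProd (fadellNeuwirth d n m))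
    (t : ℝ) : Fin (n + m) → EuclideanSpace ℝ (Fin d) :=
  motion e f (scale e x) (ceiling x) (robots d n m x) (robots' d n m x) (obstacles d n m x) t

variable {e} {f : EuclideanSpace ℝ (Fin d)}

@[fun_prop] theorem continuous_ceiling : Continuous (ceiling (d := d) (n := n) (m := m)) := by
  unfold ceiling; fun_prop

theorem scale_pos (x : FibProd (fadellNeuwirth d n m)) : 0 < scale e x :=
  div_pos (minSep_pos _) n.cast_add_one_pos

theorem pairwise_scale_le (x : FibProd (fadellNeuwirth d n m)) :
    (range (projections d n m e x)).Pairwise fun a b => (n + 1) * scale e x ≤ |a - b| := by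
  simpa only [scale, mul_div_cancel₀ _ (n.cast_add_one_ne_zero (R := ℝ))]
    using pairwise_minSep_le_abs_sub (projections d n m e x)

theorem range_inner_append_subset (x : FibProd (fadellNeuwirth d n m))
    {w : Fin n → EuclideanSpace ℝ (Fin d)} (hw : ∀ i, ⟪w i, e⟫ ∈ range (projections d n m e x)) :
    (range fun α => ⟪Fin.append w (obstacles d n m x) α, e⟫) ⊆ range (projections d n m e x) := by
  rintro _ ⟨α, rfl⟩
  induction α using Fin.addCases with
  | left i => simpa using hw i
  | right k => exact ⟨.inr (.inr k), by simp [projections]⟩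

theorem inner_obstacles_le_ceiling (hf : ‖f‖ = 1)
    (x : FibProd (fadellNeuwirth d n m)) (k : Fin m) : ⟪obstacles d n m x k, f⟫ ≤ ceiling x :=
  calc ⟪obstacles d n m x k, f⟫ ≤ ‖obstacles d n m x k‖ := by
        simpa [hf] using real_inner_le_norm (obstacles d n m x k) f
    _ ≤ ceiling x := Finset.single_le_sum (fun k _ => norm_nonneg _) (Finset.mem_univ k)

theorem continuousOn_scale (c : ℕ) :
    ContinuousOn (fun x : FibProd (fadellNeuwirth d n m) => scale e x)
      {x | (range (projections d n m e x)).ncard = c} :=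
  (continuousOn_minSep (continuous_projections e) c).div_const _

theorem injective_planPath (he : ‖e‖ = 1) (hf : ‖f‖ = 1) (hef : ⟪e, f⟫ = 0)
    (x : FibProd (fadellNeuwirth d n m)) (t : ℝ) : Injective (planPath e f x t) := by
  refine injective_motion he hf hef (scale_pos x) ?_ ?_ ((pairwise_scale_le x).mono ?_)
    ((pairwise_scale_le x).mono ?_) (inner_obstacles_le_ceiling hf x) t
  · rw [append_robots_obstacles]; exact x.1.1.2
  · rw [append_robots'_obstacles]; exact x.1.2.2
  · exact range_inner_append_subset x fun i => ⟨.inl i, rfl⟩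
  · exact range_inner_append_subset x fun i => ⟨.inr (.inl i), rfl⟩

noncomputable def planner (he : ‖e‖ = 1) (hf : ‖f‖ = 1) (hef : ⟪e, f⟫ = 0)
    (x : FibProd (fadellNeuwirth d n m)) : VertPaths (fadellNeuwirth d n m) :=
  ⟨⟨fun t => ⟨planPath e f x t, injective_planPath he hf hef x t⟩, by unfold planPath; fun_prop⟩,
    fun t => Subtype.ext <| funext fun k => by simp [fadellNeuwirth, planPath]⟩

theorem paramSecOn_aggregate (he : ‖e‖ = 1) (hf : ‖f‖ = 1) (hef : ⟪e, f⟫ = 0) (c : ℕ) :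
    ParamSecOn (fadellNeuwirth d n m) (aggregate d n m e c) := by
  refine ⟨fun y => planner he hf hef y.1, ?_, fun y => ⟨?_, ?_⟩⟩
  · have hscale : Continuous fun y : aggregate d n m e c => scale e y.1 :=
      ((continuousOn_scale c).mono
        fun _ hx => ncard_range_projections_of_mem_aggregate hx).domRestrict
    refine continuous_induced_rng.2 <| ContinuousMap.continuous_of_continuous_uncurry _ <|
      continuous_induced_rng.2 ?_
    show Continuous fun q : aggregate d n m e c × unitInterval => planPath e f q.1.1 (q.2 : ℝ)
    exact continuous_motion (hscale.comp continuous_fst) (by fun_prop) (by fun_prop) (by fun_prop)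
      (by fun_prop) (by fun_prop)
  · exact Subtype.ext <| by simp [planner, planPath, append_robots_obstacles]
  · exact Subtype.ext <| by simp [planner, planPath, append_robots'_obstacles]

end Planner

theorem exists_parametrized_motion_planner (hd : 2 ≤ d) (hm : 1 ≤ m)
    (he : ‖e‖ = 1) :
    (⋃ c ∈ Finset.Icc 1 (2 * n + m), aggregate d n m e c) = Set.univ ∧
    (∀ c c' : ℕ, c ≠ c' → Disjoint (aggregate d n m e c) (aggregate d n m e c')) ∧
    (∀ c : ℕ, ParamSecOn (fadellNeuwirth d n m) (aggregate d n m e c)) ∧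
    parTC (fadellNeuwirth d n m) ≤ 2 * n + m - 1 := by
  obtain ⟨f, hf, hef⟩ := exists_norm_eq_one_inner_eq_zero (by simpa using hd) e
  have hcov : (⋃ c ∈ Finset.Icc 1 (2 * n + m), aggregate d n m e c) = univ :=
    eq_univ_of_forall fun x => mem_biUnion
      (mem_Icc_of_mem_aggregate (mem_aggregate_ncard_range_projections hm x))
      (mem_aggregate_ncard_range_projections hm x)
  have hdisj (c c' : ℕ) (hcc' : c ≠ c') : Disjoint (aggregate d n m e c) (aggregate d n m e c') :=
    disjoint_left.2 fun x hx hx' => hcc' <|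
      (ncard_range_projections_of_mem_aggregate hx).symm.trans
        (ncard_range_projections_of_mem_aggregate hx')
  have hsec := paramSecOn_aggregate (n := n) (m := m) he hf hef
  exact ⟨hcov, hdisj, hsec, parTC_le_of_iUnion_Icc _ hcov hdisj hsec⟩

end FadellNeuwirthAlgorithm
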